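/- arXiv:1006.5127 — 2 statements merged into one kernel-verified Lean document; each statement's English description precedes it below -/
import Mathlib

section
/- Let f(x,y) be a real homogeneous polynomial of degree n ≥ 3 with n distinct real roots. Then for every (α,β) ∈ ℝ² \ {(0,0)}, the polynomial α·f_x + β·f_y has n−1 distinct real roots. -/
/-!
Write `a = (α, β)` and choose `b` with `det (a, b) = 1`. Restricting a binary form `F` to the
affine line `s ↦ s • a + b` gives a polynomial in `s` whose derivative is the restriction of
`α F_x + β F_y`. A product of `n` pairwise non-proportional linear forms restricts to a
polynomial of degree `k ∈ {n - 1, n}` with `k` distinct real roots (`k = n - 1` exactly when one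
of the forms vanishes at `a`, i.e. has its root at infinity). By Rolle's theorem its derivative
has degree `k - 1` and `k - 1` distinct real roots, so it factors into `k - 1` distinct linear
factors; adding a constant factor, a root at infinity, when `k - 1 = n - 2`, and undoing the
restriction (a form is determined by its restriction to a line avoiding the origin) gives the
factorization of `α f_x + β f_y`.
-/

open MvPolynomial

/-- The real linear binary form `p.1 * x + p.2 * y`. -/
noncomputable def lin (p : ℝ × ℝ) : MvPolynomial (Fin 2) ℝ :=
  C p.1 * X 0 + C p.2 * X 1

/-- A binary form `f` has `m` distinct real roots: it factors over `ℝ` into `m`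
pairwise non-proportional (nonzero) real linear forms, up to a nonzero constant. -/
noncomputable def HasDistinctRealRoots (f : MvPolynomial (Fin 2) ℝ) (m : ℕ) : Prop :=
  ∃ (c : ℝ) (l : Fin m → ℝ × ℝ), c ≠ 0 ∧ (∀ i, l i ≠ 0) ∧
    (∀ i j, i ≠ j → (l i).1 * (l j).2 - (l j).1 * (l i).2 ≠ 0) ∧
    f = C c * ∏ i, lin (l i)

open scoped Polynomial

theorem Derivation.map_mvPolynomial_aeval {R A M σ : Type*} [CommSemiring R] [CommSemiring A]
    [Algebra R A] [AddCommMonoid M] [Module A M] [Module R M] [IsScalarTower R A M] [Fintype σ]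
    (D : Derivation R A M) (v : σ → A) (F : MvPolynomial σ R) :
    D (aeval v F) = ∑ i, aeval v (pderiv i F) • D (v i) := by
  classical
  induction F using MvPolynomial.induction_on with
  | C a => simp
  | add p q hp hq => simp only [map_add, hp, hq, add_smul, Finset.sum_add_distrib]
  | mul_X p i hp =>
    simp [Derivation.leibniz, hp, pderiv_X, Pi.single_apply, add_smul, Finset.sum_add_distrib,
      Finset.smul_sum, smul_smul, mul_comm, apply_ite, ite_smul, add_comm]

def cross (p q : ℝ × ℝ) : ℝ := p.1 * q.2 - q.1 * p.2

namespace Polynomial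

theorem eq_C_leadingCoeff_mul_prod_X_sub_C {K : Type*} [Field K] [DecidableEq K] {p : K[X]}
    (h : p.natDegree ≤ p.roots.toFinset.card) :
    p = C p.leadingCoeff * ∏ r ∈ p.roots.toFinset, (X - C r) := by
  have hcard : p.roots.toFinset.card = Multiset.card p.roots :=
    le_antisymm (Multiset.toFinset_card_le _) ((card_roots' p).trans h)
  have := card_roots' p
  have hnodup := Multiset.toFinset_card_eq_card_iff_nodup.1 hcard
  rw [Finset.prod_eq_multiset_prod, Multiset.toFinset_val, Multiset.dedup_eq_self.2 hnodup,
    C_leadingCoeff_mul_prod_multiset_X_sub_C (by omega)]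

theorem natDegree_derivative_le_card_roots {p : ℝ[X]}
    (h : p.natDegree ≤ p.roots.toFinset.card) :
    p.derivative.natDegree ≤ p.derivative.roots.toFinset.card := by
  have := natDegree_derivative_le p
  have := card_roots_toFinset_le_derivative p
  omega

end Polynomial

noncomputable def linX (p : ℝ × ℝ) : ℝ[X] := Polynomial.C p.1 * Polynomial.X + Polynomial.C p.2

/-- A factor `linX p` with `p.1 = 0` is a constant and stands for a root at infinity. -/
def HasDistinctProjRoots (g : ℝ[X]) (m : ℕ) : Prop :=
  ∃ (c : ℝ) (l : Fin m → ℝ × ℝ), c ≠ 0 ∧ (∀ i, l i ≠ 0) ∧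
    Pairwise (fun i j ↦ cross (l i) (l j) ≠ 0) ∧ g = Polynomial.C c * ∏ i, linX (l i)

section

open Polynomial Finset

lemma linX_ne_zero {p : ℝ × ℝ} (hp : p ≠ 0) : linX p ≠ 0 := by
  intro h
  apply hp
  have h1 := congrArg (Polynomial.coeff · 1) h
  have h0 := congrArg (Polynomial.coeff · 0) h
  simp only [linX, Polynomial.coeff_add, mul_coeff_zero, coeff_C_zero, coeff_X_zero, mul_zero,
    zero_add, Polynomial.coeff_zero, Polynomial.coeff_mul_X, coeff_C_succ, add_zero] at h0 h1
  exact Prod.ext h1 h0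

lemma natDegree_linX (p : ℝ × ℝ) : (linX p).natDegree = if p.1 = 0 then 0 else 1 := by
  split_ifs with h
  · simp [linX, h]
  · exact natDegree_linear h

lemma linX_isRoot {p : ℝ × ℝ} (hp : p.1 ≠ 0) : (linX p).IsRoot (-(p.2 / p.1)) := by
  simp only [linX, IsRoot.def, Polynomial.eval_add, Polynomial.eval_mul, Polynomial.eval_C,
    Polynomial.eval_X, mul_neg]
  field_simp
  ring

variable {ι : Type*} [Fintype ι] {l : ι → ℝ × ℝ}

lemma natDegree_prod_linX (hl : ∀ i, l i ≠ 0) :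
    (∏ i, linX (l i)).natDegree = #{i | (l i).1 ≠ 0} := by
  rw [natDegree_prod _ _ fun i _ ↦ linX_ne_zero (hl i)]
  simp [natDegree_linX, Finset.sum_ite]

lemma card_sub_one_le_card_filter_fst_ne_zero
    (hl : Pairwise fun i j ↦ cross (l i) (l j) ≠ 0) :
    Fintype.card ι - 1 ≤ #{i | (l i).1 ≠ 0} := by
  have hinf : #{i | (l i).1 = 0} ≤ 1 := by
    refine Finset.card_le_one.2 fun i hi j hj ↦ by_contra fun hij ↦ hl hij ?_
    simp only [Finset.mem_filter, Finset.mem_univ, true_and] at hi hj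
    simp [cross, hi, hj]
  have := Finset.card_filter_add_card_filter_not (s := Finset.univ) (fun i ↦ (l i).1 ≠ 0)
  simp only [not_not, Finset.card_univ] at this
  omega

lemma card_filter_fst_ne_zero_le_card_roots (hl : ∀ i, l i ≠ 0)
    (hcross : Pairwise fun i j ↦ cross (l i) (l j) ≠ 0) :
    #{i | (l i).1 ≠ 0} ≤ (∏ i, linX (l i)).roots.toFinset.card := by
  have hinj : Set.InjOn (fun i ↦ -((l i).2 / (l i).1)) {i | (l i).1 ≠ 0} := by
    intro i hi j hj hij
    by_contra hne
    apply hcross hne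
    simp only [Set.mem_ofPred_eq] at hi hj hij
    field_simp at hij
    simp only [cross]
    linarith
  rw [← Finset.card_image_of_injOn (by simpa using hinj)]
  refine Finset.card_le_card fun r hr ↦ ?_
  obtain ⟨i, hi, rfl⟩ := Finset.mem_image.1 hr
  simp only [Finset.mem_filter, Finset.mem_univ, true_and] at hi
  rw [Multiset.mem_toFinset, mem_roots (Finset.prod_ne_zero_iff.2 fun i _ ↦ linX_ne_zero (hl i)),
    IsRoot, Polynomial.eval_prod]
  exact Finset.prod_eq_zero (Finset.mem_univ i) (linX_isRoot hi)

lemma hasDistinctProjRoots_C_mul_prod_X_sub_C {c : ℝ} (hc : c ≠ 0) (s : Finset ℝ) {m : ℕ}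
    (hm : #s ≤ m) (hm' : m ≤ #s + 1) :
    HasDistinctProjRoots (Polynomial.C c * ∏ r ∈ s, (Polynomial.X - Polynomial.C r)) m := by
  set e := s.equivFin.symm
  set l : Fin #s → ℝ × ℝ := fun j ↦ (1, -(e j : ℝ))
  have hprod : ∏ r ∈ s, (Polynomial.X - Polynomial.C r) = ∏ j, linX (l j) := by
    rw [← Finset.prod_coe_sort, ← e.prod_comp]
    simp [l, linX, sub_eq_add_neg]
  have hl : Pairwise fun i j ↦ cross (l i) (l j) ≠ 0 := by
    intro i j hij h
    apply hij
    apply e.injective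
    apply Subtype.ext
    simp only [cross, l] at h
    linarith
  obtain rfl | rfl : m = #s ∨ m = #s + 1 := by omega
  · exact ⟨c, l, hc, by simp [l], hl, by rw [hprod]⟩
  · refine ⟨c, Fin.cons (0, 1) l, hc, ?_, ?_, ?_⟩
    · intro i
      cases i using Fin.cases <;> simp [l]
    · intro i j hij
      cases i using Fin.cases <;> cases j using Fin.cases
      · exact absurd rfl hij
      · simp [cross, l]
      · simp [cross, l]
      · simpa only [Fin.cons_succ] using hl (ne_of_apply_ne Fin.succ hij)
    · rw [hprod, Fin.prod_univ_succ]
      simp [linX]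

lemma hasDistinctProjRoots_of_natDegree_le_card_roots {g : ℝ[X]} {m : ℕ} (hg : g ≠ 0)
    (hroots : g.natDegree ≤ g.roots.toFinset.card) (hm : g.natDegree ≤ m)
    (hm' : m ≤ g.natDegree + 1) : HasDistinctProjRoots g m := by
  have hcard : g.roots.toFinset.card = g.natDegree :=
    le_antisymm ((Multiset.toFinset_card_le _).trans (card_roots' g)) hroots
  have h := hasDistinctProjRoots_C_mul_prod_X_sub_C (leadingCoeff_ne_zero.2 hg)
    g.roots.toFinset (m := m) (by omega) (by omega)
  rwa [← eq_C_leadingCoeff_mul_prod_X_sub_C hroots] at h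

theorem HasDistinctProjRoots.derivative {g : ℝ[X]} {m : ℕ} (hm : 2 ≤ m)
    (hg : HasDistinctProjRoots g m) : HasDistinctProjRoots (derivative g) (m - 1) := by
  obtain ⟨c, l, hc, hl, hcross, rfl⟩ := hg
  have hdeg := natDegree_prod_linX hl
  have hinf := card_sub_one_le_card_filter_fst_ne_zero hcross
  have hroots := card_filter_fst_ne_zero_le_card_roots hl hcross
  rw [Fintype.card_fin] at hinf
  have hle : #{i | (l i).1 ≠ 0} ≤ m := (Finset.card_filter_le _ _).trans_eq (Finset.card_fin m)
  have hdeg' := natDegree_derivative (Polynomial.C c * ∏ i, linX (l i))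
  rw [natDegree_C_mul hc] at hdeg'
  have hg : (Polynomial.C c * ∏ i, linX (l i)).natDegree ≤
      (Polynomial.C c * ∏ i, linX (l i)).roots.toFinset.card := by
    rw [natDegree_C_mul hc, roots_C_mul _ hc]
    omega
  refine hasDistinctProjRoots_of_natDegree_le_card_roots ?_
    (natDegree_derivative_le_card_roots hg) (by omega) (by omega)
  rw [Ne, derivative_eq_zero, natDegree_C_mul hc]
  omega

end

section

variable {a b : ℝ × ℝ}

/-- The affine line `s ↦ s • a + b`: `aeval (line a b) F` is the restriction of `F` to it. -/
noncomputable def line (a b : ℝ × ℝ) : Fin 2 → ℝ[X] := ![linX (a.1, b.1), linX (a.2, b.2)]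

def lineCoeffs (a b l : ℝ × ℝ) : ℝ × ℝ := (l.1 * a.1 + l.2 * a.2, l.1 * b.1 + l.2 * b.2)

lemma aeval_line_lin (a b l : ℝ × ℝ) : aeval (line a b) (lin l) = linX (lineCoeffs a b l) := by
  simp only [line, lin, linX, lineCoeffs, map_add, map_mul, aeval_C, aeval_X,
    Polynomial.algebraMap_eq, Matrix.cons_val_zero, Matrix.cons_val_one]
  ring

lemma cross_lineCoeffs (a b p q : ℝ × ℝ) :
    cross (lineCoeffs a b p) (lineCoeffs a b q) = cross a b * cross p q := by
  simp only [cross, lineCoeffs]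
  ring

lemma lineCoeffs_lineCoeffs (h : cross a b = 1) (p : ℝ × ℝ) :
    lineCoeffs a b (lineCoeffs (b.2, -a.2) (-b.1, a.1) p) = p := by
  simp only [cross] at h
  ext
  · simp only [lineCoeffs]
    linear_combination p.1 * h
  · simp only [lineCoeffs]
    linear_combination p.2 * h

lemma eq_zero_of_lineCoeffs_eq_zero (h : cross a b ≠ 0) {l : ℝ × ℝ} (hl : lineCoeffs a b l = 0) :
    l = 0 := by
  simp only [lineCoeffs, Prod.ext_iff, Prod.fst_zero, Prod.snd_zero] at hl
  simp only [cross] at h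
  ext
  · apply (mul_eq_zero.1 _).resolve_right h
    linear_combination b.2 * hl.1 - a.2 * hl.2
  · apply (mul_eq_zero.1 _).resolve_right h
    linear_combination a.1 * hl.2 - b.1 * hl.1

lemma derivative_aeval_line (a b : ℝ × ℝ) (F : MvPolynomial (Fin 2) ℝ) :
    Polynomial.derivative (aeval (line a b) F) =
      aeval (line a b) (C a.1 * pderiv 0 F + C a.2 * pderiv 1 F) := by
  rw [← Polynomial.derivative'_apply, Derivation.map_mvPolynomial_aeval]
  simp only [line, linX, Polynomial.derivative'_apply, smul_eq_mul, Fin.sum_univ_two,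
    Matrix.cons_val_zero, Polynomial.derivative_mul,
    Polynomial.derivative_C, zero_mul, Polynomial.derivative_X, mul_one, zero_add, add_zero,
    Matrix.cons_val_one, Matrix.cons_val_fin_one, map_add, map_mul, algHom_C,
    Polynomial.algebraMap_eq]
  ring

lemma isHomogeneous_lin (p : ℝ × ℝ) : (lin p).IsHomogeneous 1 :=
  (isHomogeneous_C_mul_X p.1 0).add (isHomogeneous_C_mul_X p.2 1)

lemma isHomogeneous_C_mul_prod_lin {m : ℕ} (c : ℝ) (l : Fin m → ℝ × ℝ) :
    (C c * ∏ i, lin (l i)).IsHomogeneous m := by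
  simpa using
    (IsHomogeneous.prod Finset.univ _ (fun _ ↦ 1) fun i _ ↦ isHomogeneous_lin (l i)).C_mul c

lemma eq_of_aeval_line_eq_of_isHomogeneous (h : cross a b = 1) {m : ℕ}
    {F G : MvPolynomial (Fin 2) ℝ} (hF : F.IsHomogeneous m) (hG : G.IsHomogeneous m)
    (hFG : aeval (line a b) F = aeval (line a b) G) : F = G := by
  -- `Φ F` is `F` in the coordinates `(x, y) ↦ x • a + y • b`, `Ψ` is the inverse change of
  -- coordinates, and the dehomogenization `Φ F (x, 1)` is the restriction of `F` to the line.
  set Φ := aeval (R := ℝ) ![lin (a.1, b.1), lin (a.2, b.2)]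
  set Ψ := aeval (R := ℝ) ![lin (b.2, -b.1), lin (-a.2, a.1)]
  have hΨΦ : Ψ.comp Φ = AlgHom.id ℝ _ := by
    have hC : C a.1 * C b.2 - C b.1 * C a.2 = (1 : MvPolynomial (Fin 2) ℝ) := by
      simp only [← C_mul, ← C_sub, ← C_1]
      exact congrArg C h
    refine MvPolynomial.algHom_ext fun i ↦ ?_
    fin_cases i
    · simp only [Φ, Ψ, aeval_eq_bind₁, lin, C_neg, neg_mul, Fin.zero_eta, AlgHom.coe_comp,
        Function.comp_apply, bind₁_X_right, Matrix.cons_val_zero, map_add, map_mul, algHom_C,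
        algebraMap_eq, Matrix.cons_val_one, Matrix.cons_val_fin_one, AlgHom.coe_id, id_eq]
      linear_combination X 0 * hC
    · simp only [Φ, Ψ, aeval_eq_bind₁, lin, C_neg, neg_mul, Fin.mk_one, AlgHom.coe_comp,
        Function.comp_apply, bind₁_X_right, Matrix.cons_val_one, Matrix.cons_val_fin_one, map_add,
        map_mul, algHom_C, algebraMap_eq, Matrix.cons_val_zero, AlgHom.coe_id, id_eq]
      linear_combination X 1 * hC
  have hline : (aeval ![Polynomial.X, 1]).comp Φ = aeval (line a b) := by
    ext i
    fin_cases i <;> simp [Φ, line, lin, linX]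
  have hΦ : (Φ (F - G)).IsHomogeneous m := by
    rw [← one_mul m]
    exact (hF.sub hG).aeval _ fun i ↦ by fin_cases i <;> exact isHomogeneous_lin _
  have hΦ0 : Φ (F - G) = 0 := by
    rw [← Polynomial.homogenize_eq_of_isHomogeneous hΦ (p := 0), Polynomial.homogenize_zero]
    rw [← AlgHom.comp_apply, hline, map_sub, hFG, sub_self]
  rw [← sub_eq_zero, ← AlgHom.id_apply (R := ℝ) (F - G), ← hΨΦ, AlgHom.comp_apply, hΦ0, map_zero]

theorem HasDistinctRealRoots.aeval_line (h : cross a b ≠ 0) {m : ℕ}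
    {f : MvPolynomial (Fin 2) ℝ} (hf : HasDistinctRealRoots f m) :
    HasDistinctProjRoots (aeval (line a b) f) m := by
  obtain ⟨c, l, hc, hl, hcross, rfl⟩ := hf
  refine ⟨c, fun i ↦ lineCoeffs a b (l i), hc,
    fun i h0 ↦ hl i (eq_zero_of_lineCoeffs_eq_zero h h0), fun i j hij ↦ ?_, ?_⟩
  · show cross (lineCoeffs a b (l i)) (lineCoeffs a b (l j)) ≠ 0
    rw [cross_lineCoeffs]
    exact mul_ne_zero h (hcross i j hij)
  · simp [aeval_line_lin, Polynomial.algebraMap_eq]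

theorem hasDistinctRealRoots_of_aeval_line (h : cross a b = 1) {m : ℕ}
    {F : MvPolynomial (Fin 2) ℝ} (hF : F.IsHomogeneous m)
    (hFab : HasDistinctProjRoots (aeval (line a b) F) m) : HasDistinctRealRoots F m := by
  obtain ⟨c, p, hc, hp, hcross, hFp⟩ := hFab
  set T := lineCoeffs (b.2, -a.2) (-b.1, a.1)
  have hT : cross (b.2, -a.2) (-b.1, a.1) = 1 := by
    simp only [cross] at h ⊢
    linear_combination h
  refine ⟨c, fun i ↦ T (p i), hc,
    fun i h0 ↦ hp i (eq_zero_of_lineCoeffs_eq_zero (hT ▸ one_ne_zero) h0), fun i j hij ↦ ?_, ?_⟩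
  · show cross (T (p i)) (T (p j)) ≠ 0
    rw [cross_lineCoeffs, hT, one_mul]
    exact hcross hij
  · refine eq_of_aeval_line_eq_of_isHomogeneous h hF (isHomogeneous_C_mul_prod_lin c _) ?_
    simp [hFp, aeval_line_lin, lineCoeffs_lineCoeffs h, T, Polynomial.algebraMap_eq]

lemma exists_cross_eq_one (ha : a ≠ 0) : ∃ b, cross a b = 1 := by
  have hn : a.1 ^ 2 + a.2 ^ 2 ≠ 0 := by
    contrapose! ha
    ext <;> simp only [Prod.fst_zero, Prod.snd_zero] <;> nlinarith [sq_nonneg a.1, sq_nonneg a.2]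
  exact ⟨(-a.2 / (a.1 ^ 2 + a.2 ^ 2), a.1 / (a.1 ^ 2 + a.2 ^ 2)), by
    simp only [cross]; field_simp; ring⟩

end

theorem stmt_1 (n : ℕ) (hn : 3 ≤ n) (f : MvPolynomial (Fin 2) ℝ)
    (hhom : f.IsHomogeneous n)
    (hroots : HasDistinctRealRoots f n) :
    ∀ α β : ℝ, (α, β) ≠ (0, 0) →
      HasDistinctRealRoots (C α * pderiv 0 f + C β * pderiv 1 f) (n - 1) := by
  intro α β hαβ
  obtain ⟨b, hb⟩ := exists_cross_eq_one hαβ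
  have hline := (hroots.aeval_line (hb ▸ one_ne_zero)).derivative (by omega)
  rw [derivative_aeval_line] at hline
  exact hasDistinctRealRoots_of_aeval_line hb
    ((hhom.pderiv.C_mul α).add (hhom.pderiv.C_mul β)) hline
end

section
/- Let f(x,y) be a real binary form of degree n ≥ 3 with n distinct real roots. Then the Hessian determinant H(f) = f_xx·f_yy − f_xy² is strictly negative at every point (x,y) ∈ ℝ² \ {(0,0)}. -/
open MvPolynomial

/-- The Hessian determinant `f_xx f_yy - f_xy ^ 2` of a binary form. -/
noncomputable def hess (f : MvPolynomial (Fin 2) ℝ) : MvPolynomial (Fin 2) ℝ :=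
  pderiv 0 (pderiv 0 f) * pderiv 1 (pderiv 1 f) - (pderiv 0 (pderiv 1 f)) ^ 2

/-!
Euler's identity for `f` and for its first partial derivatives gives
`x² H = (n - 1) (n f f_yy - (n - 1) f_y²)`, and the same with `y²`, `f_xx`, `f_x`.
Along a line `x = const ≠ 0` the form is a product `P` of `n` affine functions of `y` with
pairwise distinct roots, and such a product satisfies Newton's inequality
`n P P'' < (n - 1) P'²`: off the roots, `P'/P = Σ γᵢ` and `P''/P = (Σ γᵢ)² - Σ γᵢ²` with the
`γᵢ` not all equal, so this is the strict Cauchy–Schwarz inequality `(Σ γᵢ)² < n Σ γᵢ²`;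
at a root of one factor, `P = 0` while `P' ≠ 0`.
-/

open Finset

lemma MvPolynomial.pderiv_pderiv_comm {R σ : Type*} [CommSemiring R] (i j : σ)
    (p : MvPolynomial σ R) : pderiv i (pderiv j p) = pderiv j (pderiv i p) := by
  classical
  induction p using MvPolynomial.induction_on with
  | C a => simp
  | add p q hp hq => simp only [map_add, hp, hq]
  | mul_X p k hp =>
    have hX : ∀ a b : σ, pderiv a (pderiv b (X k : MvPolynomial σ R)) = 0 := fun a b => by
      rw [pderiv_X, Pi.single_apply]; split_ifs <;> simp
    simp only [pderiv_mul, map_add, hp, hX]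
    ring

lemma MvPolynomial.IsHomogeneous.sum_mul_eval_pderiv {R σ : Type*} [CommSemiring R]
    [Fintype σ] {φ : MvPolynomial σ R} {n : ℕ} (h : φ.IsHomogeneous n) (v : σ → R) :
    ∑ i, v i * eval v (pderiv i φ) = n * eval v φ := by
  simpa using congrArg (eval v) h.sum_X_mul_pderiv

lemma sq_sum_lt_card_mul_sum_sq {K ι : Type*} [Field K] [LinearOrder K] [IsStrictOrderedRing K]
    {s : Finset ι} {γ : ι → K} {i j : ι} (hi : i ∈ s) (hj : j ∈ s) (hij : γ i ≠ γ j) :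
    (∑ k ∈ s, γ k) ^ 2 < #s * ∑ k ∈ s, γ k ^ 2 := by
  have hs : (0 : K) < #s := by exact_mod_cast card_pos.2 ⟨i, hi⟩
  set m := (∑ k ∈ s, γ k) / #s
  have hvariance : #s * ∑ k ∈ s, γ k ^ 2 - (∑ k ∈ s, γ k) ^ 2 =
      #s * ∑ k ∈ s, (γ k - m) ^ 2 := by
    simp only [sub_sq, sum_add_distrib, sum_sub_distrib, ← sum_mul, ← mul_sum, sum_const,
      nsmul_eq_mul, m]
    field_simp
    ring
  have hpos : 0 < ∑ k ∈ s, (γ k - m) ^ 2 := by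
    obtain ⟨l, hl, hlm⟩ : ∃ l ∈ s, γ l ≠ m := by
      by_contra! h
      exact hij ((h i hi).trans (h j hj).symm)
    exact sum_pos' (fun k _ => sq_nonneg _) ⟨l, hl, by positivity⟩
  nlinarith [mul_pos hs hpos]

section ProductOfLinear

variable {K σ ι : Type*} [Field K] {k : σ} {g : ι → MvPolynomial σ K} {β : ι → K}
  {v : σ → K}

lemma eval_pderiv_prod_of_pderiv_eq_C (hβ : ∀ i, pderiv k (g i) = C (β i)) (s : Finset ι)
    (hg : ∀ i ∈ s, eval v (g i) ≠ 0) :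
    eval v (pderiv k (∏ i ∈ s, g i)) = eval v (∏ i ∈ s, g i) * ∑ i ∈ s, β i / eval v (g i) := by
  classical
  induction s using Finset.induction_on with
  | empty => simp
  | insert a s ha ih =>
    have hga := hg a (mem_insert_self a s)
    rw [prod_insert ha, sum_insert ha, pderiv_mul, hβ, map_add, eval_mul, eval_mul, eval_C,
      eval_mul, ih fun i hi => hg i (mem_insert_of_mem hi)]
    field_simp

lemma eval_pderiv_pderiv_prod_of_pderiv_eq_C (hβ : ∀ i, pderiv k (g i) = C (β i))
    (s : Finset ι) (hg : ∀ i ∈ s, eval v (g i) ≠ 0) :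
    eval v (pderiv k (pderiv k (∏ i ∈ s, g i))) = eval v (∏ i ∈ s, g i) *
      ((∑ i ∈ s, β i / eval v (g i)) ^ 2 - ∑ i ∈ s, (β i / eval v (g i)) ^ 2) := by
  classical
  induction s using Finset.induction_on with
  | empty => simp
  | insert a s ha ih =>
    have hga := hg a (mem_insert_self a s)
    have hs : ∀ i ∈ s, eval v (g i) ≠ 0 := fun i hi => hg i (mem_insert_of_mem hi)
    simp only [prod_insert ha, sum_insert ha, pderiv_mul, hβ, pderiv_C, map_add, eval_mul,
      eval_C, map_zero, ih hs, eval_pderiv_prod_of_pderiv_eq_C hβ s hs]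
    field_simp
    ring

lemma eval_pderiv_prod_of_eval_eq_zero [DecidableEq ι] (hβ : ∀ i, pderiv k (g i) = C (β i))
    {s : Finset ι} {a : ι} (ha : a ∈ s) (hga : eval v (g a) = 0) :
    eval v (pderiv k (∏ i ∈ s, g i)) = β a * ∏ i ∈ s.erase a, eval v (g i) := by
  rw [← mul_prod_erase s g ha, pderiv_mul, hβ, map_add, eval_mul, eval_mul, hga, eval_C,
    map_prod]
  ring

end ProductOfLinear

lemma card_mul_eval_mul_eval_pderiv_pderiv_lt {σ ι : Type*} [Fintype ι] {k : σ}
    {g : ι → MvPolynomial σ ℝ} {β : ι → ℝ} {v : σ → ℝ} {c : ℝ} {F : MvPolynomial σ ℝ}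
    (hβ : ∀ i, pderiv k (g i) = C (β i)) (hcard : 2 ≤ Fintype.card ι)
    (hdist : ∀ i j, i ≠ j → β i * eval v (g j) ≠ β j * eval v (g i)) (hc : c ≠ 0)
    (hF : F = C c * ∏ i, g i) :
    Fintype.card ι * eval v F * eval v (pderiv k (pderiv k F)) <
      (Fintype.card ι - 1) * eval v (pderiv k F) ^ 2 := by
  classical
  have hn : (1 : ℝ) < Fintype.card ι := by exact_mod_cast hcard
  subst hF
  simp only [pderiv_C_mul, eval_mul, eval_C]
  by_cases hzero : ∃ a, eval v (g a) = 0
  · obtain ⟨a, ha⟩ := hzero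
    have hothers : ∀ j ∈ univ.erase a, eval v (g j) ≠ 0 ∧ β a ≠ 0 := fun j hj => by
      have := hdist a j (ne_of_mem_erase hj).symm
      rw [ha, mul_zero] at this
      exact ⟨right_ne_zero_of_mul this, left_ne_zero_of_mul this⟩
    obtain ⟨j, hj⟩ : (univ.erase a).Nonempty := by
      rw [← card_pos, card_erase_of_mem (mem_univ a), card_univ]; omega
    rw [map_prod, prod_eq_zero (mem_univ a) ha,
      eval_pderiv_prod_of_eval_eq_zero hβ (mem_univ a) ha]
    have hderiv : β a * ∏ i ∈ univ.erase a, eval v (g i) ≠ 0 :=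
      mul_ne_zero (hothers j hj).2 (prod_ne_zero_iff.2 fun i hi => (hothers i hi).1)
    have : 0 < (c * (β a * ∏ i ∈ univ.erase a, eval v (g i))) ^ 2 := by positivity
    nlinarith
  · simp only [not_exists] at hzero
    obtain ⟨i, j, hij⟩ := Fintype.exists_pair_of_one_lt_card hcard
    have hγ : β i / eval v (g i) ≠ β j / eval v (g j) := by
      rw [Ne, div_eq_div_iff (hzero i) (hzero j)]
      exact hdist i j hij
    have hCS := sq_sum_lt_card_mul_sum_sq (γ := fun i => β i / eval v (g i)) (mem_univ i)
      (mem_univ j) hγ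
    rw [card_univ] at hCS
    rw [eval_pderiv_prod_of_pderiv_eq_C hβ _ fun i _ => hzero i,
      eval_pderiv_pderiv_prod_of_pderiv_eq_C hβ _ fun i _ => hzero i]
    have hP : eval v (∏ i, g i) ≠ 0 := by
      rw [map_prod]; exact prod_ne_zero_iff.2 fun i _ => hzero i
    have : 0 < (c * eval v (∏ i, g i)) ^ 2 := by positivity
    -- after division by `(c P)²` the claim is exactly `hCS`
    nlinarith

lemma sq_mul_hessian_eq_of_euler {n x y f fx fy fxx fxy fyy : ℝ}
    (h : x * fx + y * fy = n * f) (hx : x * fxx + y * fxy = (n - 1) * fx)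
    (hy : x * fxy + y * fyy = (n - 1) * fy) :
    x ^ 2 * (fxx * fyy - fxy ^ 2) = (n - 1) * (n * f * fyy - (n - 1) * fy ^ 2) := by
  linear_combination (x * fyy) * hx + ((n - 1) * fyy) * h - (x * fxy + (n - 1) * fy) * hy

lemma MvPolynomial.IsHomogeneous.sq_mul_eval_hess {f : MvPolynomial (Fin 2) ℝ} {n : ℕ}
    (hf : f.IsHomogeneous n) (hn : 1 ≤ n) (x y : ℝ) :
    x ^ 2 * eval ![x, y] (hess f) = (n - 1) * (n * eval ![x, y] f *
      eval ![x, y] (pderiv 1 (pderiv 1 f)) - (n - 1) * eval ![x, y] (pderiv 1 f) ^ 2) ∧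
    y ^ 2 * eval ![x, y] (hess f) = (n - 1) * (n * eval ![x, y] f *
      eval ![x, y] (pderiv 0 (pderiv 0 f)) - (n - 1) * eval ![x, y] (pderiv 0 f) ^ 2) := by
  have h := hf.sum_mul_eval_pderiv ![x, y]
  have h0 := (hf.pderiv (i := 0)).sum_mul_eval_pderiv ![x, y]
  have h1 := (hf.pderiv (i := 1)).sum_mul_eval_pderiv ![x, y]
  simp only [Fin.sum_univ_two, Matrix.cons_val_zero, Matrix.cons_val_one, Nat.cast_sub hn,
    Nat.cast_one] at h h0 h1
  rw [pderiv_pderiv_comm 1 0] at h0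
  simp only [hess, map_sub, map_mul, map_pow]
  refine ⟨sq_mul_hessian_eq_of_euler h h0 h1, ?_⟩
  linear_combination sq_mul_hessian_eq_of_euler ((add_comm _ _).trans h)
    ((add_comm _ _).trans h1) ((add_comm _ _).trans h0)

lemma pderiv_zero_lin (p : ℝ × ℝ) : pderiv 0 (lin p) = C p.1 := by simp [lin]

lemma pderiv_one_lin (p : ℝ × ℝ) : pderiv 1 (lin p) = C p.2 := by simp [lin]

lemma eval_lin (p : ℝ × ℝ) (x y : ℝ) : eval ![x, y] (lin p) = p.1 * x + p.2 * y := by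
  simp [lin]

theorem stmt_11 (n : ℕ) (hn : 3 ≤ n) (f : MvPolynomial (Fin 2) ℝ)
    (hhom : f.IsHomogeneous n) (hroots : HasDistinctRealRoots f n) :
    ∀ x y : ℝ, (x, y) ≠ (0, 0) → eval ![x, y] (hess f) < 0 := by
  obtain ⟨c, l, hc, -, hdet, hf⟩ := hroots
  intro x y hxy
  obtain ⟨hx2, hy2⟩ := hhom.sq_mul_eval_hess (by omega) x y
  have hcard : 2 ≤ Fintype.card (Fin n) := by rw [Fintype.card_fin]; omega
  have hn1 : (1 : ℝ) < n := by exact_mod_cast (by omega : 1 < n)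
  by_cases hx : x = 0
  · have hy : y ≠ 0 := by rintro rfl; exact hxy (by rw [hx])
    have hnewton := card_mul_eval_mul_eval_pderiv_pderiv_lt (k := 0) (v := ![x, y])
      (fun i => pderiv_zero_lin (l i)) hcard (fun i j hij h => mul_ne_zero hy (hdet i j hij)
        (by simp only [eval_lin] at h; linear_combination h)) hc hf
    rw [Fintype.card_fin] at hnewton
    refine neg_of_mul_neg_right (a := y ^ 2) ?_ (sq_nonneg y)
    rw [hy2]
    exact mul_neg_of_pos_of_neg (by linarith) (by linarith)
  · have hnewton := card_mul_eval_mul_eval_pderiv_pderiv_lt (k := 1) (v := ![x, y])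
      (fun i => pderiv_one_lin (l i)) hcard (fun i j hij h => mul_ne_zero hx (hdet i j hij)
        (by simp only [eval_lin] at h; linear_combination -h)) hc hf
    rw [Fintype.card_fin] at hnewton
    refine neg_of_mul_neg_right (a := x ^ 2) ?_ (sq_nonneg x)
    rw [hx2]
    exact mul_neg_of_pos_of_neg (by linarith) (by linarith)
end
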